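/- arXiv:0907.2584 — 2 statements merged into one kernel-verified Lean document; each statement's English description precedes it below -/
import Mathlib

section
/- For 0 ≤ r ≤ p, the r-th power of the parasupercovariant derivative acts on f(x,θ) = Σ_{k=0}^p f_k(x) θ^k by D^r f = Σ_{k=0}^{r-1} ([k]_q!/[p-(r-1)+k]_q!) f_k'(x) θ^{p-(r-1)+k} + Σ_{k=r}^p ([k]_q!/[k-r]_q!) f_k(x) θ^{k-r}. -/
open Complex Finset

/-- The `q`-integer `[n]_q = 1 + q + ⋯ + q^(n-1)` (so `[0]_q = 0`). -/
noncomputable def qint (q : ℂ) (n : ℕ) : ℂ := ∑ i ∈ Finset.range n, q ^ i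

/-- The `q`-factorial `[n]_q! = [1]_q [2]_q ⋯ [n]_q`, with `[0]_q! = 1`. -/
noncomputable def qfact (q : ℂ) (n : ℕ) : ℂ := ∏ i ∈ Finset.range n, qint q (i + 1)

/-- The parasupercovariant derivative `D = ∂_θ + (θ^p/[p]_q!) ∂_x` acting on the
components `(f_0, …, f_p)` of a parasuperfunction `f(x,θ) = Σ f_k(x) θ^k`:
`(Df)_k = [k+1]_q f_{k+1}` for `k < p` and `(Df)_p = (1/[p]_q!) f_0'`. -/
noncomputable def Dop (p : ℕ) (q : ℂ) (f : ℕ → ℝ → ℂ) : ℕ → ℝ → ℂ :=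
  fun k x =>
    if k < p then qint q (k + 1) * f (k + 1) x
    else if k = p then (qfact q p)⁻¹ * deriv (f 0) x
    else 0

lemma qpow_ne_one (p : ℕ) (hp : 1 ≤ p) (q : ℂ)
    (hq : q = Complex.exp (2 * Real.pi * Complex.I / (p + 1)))
    (n : ℕ) (hn1 : 1 ≤ n) (hnp : n ≤ p) : q ^ n ≠ 1 := by
  subst hq
  rw [← Complex.exp_nat_mul]
  intro h
  rw [Complex.exp_eq_one_iff] at h
  obtain ⟨k, hk⟩ := h
  have hπ : (2 * (Real.pi:ℂ) * Complex.I) ≠ 0 := by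
    simp [Real.pi_ne_zero, Complex.I_ne_zero]
  have hp1 : ((p:ℂ) + 1) ≠ 0 := by
    exact_mod_cast Nat.succ_ne_zero p
  have : (n : ℂ) = k * ((p:ℂ) + 1) := by
    field_simp at hk
    apply mul_right_cancel₀ hπ
    linear_combination (2 * (Real.pi:ℂ) * Complex.I) * hk
  have h2 : (n : ℤ) = k * ((p:ℤ) + 1) := by exact_mod_cast this
  have hn1' : (1:ℤ) ≤ (n:ℤ) := by exact_mod_cast hn1
  have hnp' : (n:ℤ) ≤ (p:ℤ) := by exact_mod_cast hnp
  rcases le_or_gt k 0 with hk0 | hk0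
  · nlinarith
  · nlinarith

lemma qint_ne_zero (p : ℕ) (hp : 1 ≤ p) (q : ℂ)
    (hq : q = Complex.exp (2 * Real.pi * Complex.I / (p + 1)))
    (n : ℕ) (hn1 : 1 ≤ n) (hnp : n ≤ p) : qint q n ≠ 0 := by
  have hq1 : q ≠ 1 := by
    intro h
    exact qpow_ne_one p hp q hq 1 le_rfl hp (by simp [h])
  rw [qint, geom_sum_eq hq1]
  exact div_ne_zero (sub_ne_zero.mpr (qpow_ne_one p hp q hq n hn1 hnp))
    (sub_ne_zero.mpr hq1)

lemma qfact_ne_zero (p : ℕ) (hp : 1 ≤ p) (q : ℂ)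
    (hq : q = Complex.exp (2 * Real.pi * Complex.I / (p + 1)))
    (n : ℕ) (hnp : n ≤ p) : qfact q n ≠ 0 := by
  rw [qfact, Finset.prod_ne_zero_iff]
  intro i hi
  exact qint_ne_zero p hp q hq (i + 1) (Nat.le_add_left 1 i)
    (by have := Finset.mem_range.mp hi; omega)

/-- Explicit action of `D^r` (for `0 ≤ r ≤ p`) on `f(x,θ) = Σ_{k=0}^p f_k(x) θ^k`:
`D^r f = Σ_{k=0}^{r-1} ([k]_q!/[p-(r-1)+k]_q!) f_k'(x) θ^{p-(r-1)+k}
       + Σ_{k=r}^p ([k]_q!/[k-r]_q!) f_k(x) θ^{k-r}`,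
stated here componentwise: the coefficient of `θ^m` in `D^r f` is
`([m+r]_q!/[m]_q!) f_{m+r}(x)` when `m + r ≤ p`, and
`([m+r-(p+1)]_q!/[m]_q!) f_{m+r-(p+1)}'(x)` otherwise. -/
theorem Dop_pow_apply (p : ℕ) (hp : 1 ≤ p) (q : ℂ)
    (hq : q = Complex.exp (2 * Real.pi * Complex.I / (p + 1)))
    (f : ℕ → ℝ → ℂ) (hf : ∀ k ≤ p, ContDiff ℝ (⊤ : ℕ∞) (f k))
    (r : ℕ) (hr : r ≤ p) (m : ℕ) (hm : m ≤ p) :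
    (Dop p q)^[r] f m =
      if m + r ≤ p then fun x => (qfact q (m + r) / qfact q m) * f (m + r) x
      else fun x => (qfact q (m + r - (p + 1)) / qfact q m) * deriv (f (m + r - (p + 1))) x := by
  have key : ∀ r, r ≤ p → ∀ m, m ≤ p →
      (Dop p q)^[r] f m =
      if m + r ≤ p then fun x => (qfact q (m + r) / qfact q m) * f (m + r) x
      else fun x => (qfact q (m + r - (p + 1)) / qfact q m) * deriv (f (m + r - (p + 1))) x := by
    intro r
    induction r with
    | zero =>
      intro _ m hm
      simp only [Function.iterate_zero, id_eq, Nat.add_zero]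
      rw [if_pos hm]
      funext x
      rw [div_self (qfact_ne_zero p hp q hq m hm), one_mul]
    | succ r ih =>
      intro hr m hm
      have hr' : r ≤ p := Nat.le_of_succ_le hr
      rw [Function.iterate_succ_apply']
      set g := (Dop p q)^[r] f with hgdef
      by_cases hmp : m < p
      · -- m < p
        have hg := ih hr' (m + 1) (by omega)
        by_cases hc : m + (r + 1) ≤ p
        · rw [if_pos hc]
          funext x
          simp only [Dop]
          rw [if_pos hmp, congrFun hg x, if_pos (show m + 1 + r ≤ p by omega)]
          have e0 : m + 1 + r = m + (r + 1) := by omega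
          have e1 : qfact q (m + 1) = qfact q m * qint q (m + 1) := by
            rw [qfact, qfact, Finset.prod_range_succ]
          rw [e0, e1]
          have h1 : qfact q m ≠ 0 := qfact_ne_zero p hp q hq m hm
          have h2 : qint q (m + 1) ≠ 0 :=
            qint_ne_zero p hp q hq (m + 1) (by omega) (by omega)
          field_simp
        · rw [if_neg hc]
          funext x
          simp only [Dop]
          rw [if_pos hmp, congrFun hg x, if_neg (show ¬ m + 1 + r ≤ p by omega)]
          have e0 : m + 1 + r - (p + 1) = m + (r + 1) - (p + 1) := by omega
          have e1 : qfact q (m + 1) = qfact q m * qint q (m + 1) := by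
            rw [qfact, qfact, Finset.prod_range_succ]
          rw [e0, e1]
          have h1 : qfact q m ≠ 0 := qfact_ne_zero p hp q hq m hm
          have h2 : qint q (m + 1) ≠ 0 :=
            qint_ne_zero p hp q hq (m + 1) (by omega) (by omega)
          field_simp
      · -- m = p
        have hmp' : m = p := by omega
        have hg := ih hr' 0 (Nat.zero_le p)
        rw [if_neg (show ¬ m + (r + 1) ≤ p by omega)]
        funext x
        simp only [Dop]
        rw [if_neg hmp, if_pos hmp', hg, if_pos (show 0 + r ≤ p by omega)]
        rw [deriv_const_mul _ (((hf (0 + r) (by omega)).differentiable (by simp)).differentiableAt)]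
        have e0 : m + (r + 1) - (p + 1) = 0 + r := by omega
        have e1 : qfact q 0 = 1 := by simp [qfact]
        rw [e0, e1, hmp']
        have h1 : qfact q p ≠ 0 := qfact_ne_zero p hp q hq p le_rfl
        field_simp
  exact key r hr m hm
end

section
/- In the degenerate case c₁ = -2α, c₂ = α², the parasuperfunction g(x,θ) = (p+1)α^p x e_q(α^{p+1}x; αθ) + e^{α^{p+1}x} Σ_{k=1}^p (k α^{k-1}/[k]_q!) θ^k satisfies (D² - 2αD + α²)g = 0. -/
/-!
Let `e_k(x) = α^k e^{α^{p+1} x} / [k]_q!` be the components of `e_q(α^{p+1}x; αθ)`, which satisfies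
`D e = α e`. The function `g` is `∂_α e`, and differentiating `(D - α) e = 0` in `α` gives
`(D - α) g = e`; hence `(D - α)² g = (D - α) e = 0`. Both identities `D e = α e` and
`D g = α g + e` are direct componentwise computations, using `[k]_q ≠ 0` for `k ≤ p`, which holds
because `q` is a primitive `(p+1)`-th root of unity.
-/

open Complex Finset

section QFactorial

variable {q : ℂ} {p k : ℕ}

@[simp]
lemma qfact_zero (q : ℂ) : qfact q 0 = 1 := prod_range_zero _

lemma qfact_succ (q : ℂ) (k : ℕ) : qfact q (k + 1) = qfact q k * qint q (k + 1) :=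
  prod_range_succ _ _

lemma qint_succ_ne_zero_of_qfact_ne_zero (h : qfact q p ≠ 0) (hk : k < p) :
    qint q (k + 1) ≠ 0 :=
  prod_ne_zero_iff.mp h k (mem_range.mpr hk)

lemma IsPrimitiveRoot.qfact_ne_zero (hq : IsPrimitiveRoot q (p + 1)) : qfact q p ≠ 0 := by
  refine prod_ne_zero_iff.mpr fun i hi => ?_
  have hi : i < p := mem_range.mp hi
  rw [qint, geom_sum_eq (hq.ne_one (by omega))]
  exact div_ne_zero (sub_ne_zero.mpr (hq.pow_ne_one_of_pos_of_lt (by omega) (by omega)))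
    (sub_ne_zero.mpr (hq.ne_one (by omega)))

lemma qint_mul_div_qfact_succ (h : qint q (k + 1) ≠ 0) (c : ℂ) :
    qint q (k + 1) * (c / qfact q (k + 1)) = c / qfact q k := by
  rw [qfact_succ, ← mul_div_assoc, mul_comm _ c, mul_div_mul_right _ _ h]

end QFactorial

section ParasupercovariantDerivative

variable {p : ℕ} {q : ℂ}

lemma Dop_of_lt (f : ℕ → ℝ → ℂ) {k : ℕ} (hk : k < p) (x : ℝ) :
    Dop p q f k x = qint q (k + 1) * f (k + 1) x := if_pos hk

lemma Dop_self (f : ℕ → ℝ → ℂ) (x : ℝ) :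
    Dop p q f p x = (qfact q p)⁻¹ * deriv (f 0) x := by
  simp [Dop]

lemma Dop_congr {f f' : ℕ → ℝ → ℂ} (h : ∀ k ≤ p, f k = f' k) : Dop p q f = Dop p q f' := by
  funext k x
  unfold Dop
  split_ifs with hk
  · rw [h (k + 1) hk]
  · rw [h 0 p.zero_le]
  · rfl

lemma Dop_const_mul_add (a : ℂ) {f f' : ℕ → ℝ → ℂ} {x : ℝ}
    (hf : DifferentiableAt ℝ (f 0) x) (hf' : DifferentiableAt ℝ (f' 0) x) (k : ℕ) :
    Dop p q (fun k x => a * f k x + f' k x) k x = a * Dop p q f k x + Dop p q f' k x := by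
  unfold Dop
  split_ifs
  · ring
  · beta_reduce
    rw [deriv_fun_add (hf.const_mul a) hf', deriv_const_mul _ hf]
    ring
  · ring

end ParasupercovariantDerivative

/-- Components of `e_q(α^(p+1) x; αθ)`. -/
noncomputable def qExpSol (p : ℕ) (q α : ℂ) (k : ℕ) (x : ℝ) : ℂ :=
  α ^ k * exp (α ^ (p + 1) * x) / qfact q k

/-- The derivative of `qExpSol` in `α`; at `k = 0` the truncated exponent `k - 1` is harmless,
since its coefficient `k` vanishes. -/
noncomputable def qExpSolDerivParam (p : ℕ) (q α : ℂ) (k : ℕ) (x : ℝ) : ℂ :=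
  (((p : ℂ) + 1) * α ^ (p + k) * x + (k : ℂ) * α ^ (k - 1)) * exp (α ^ (p + 1) * x) / qfact q k

lemma natCast_mul_mul_pow_sub_one (k : ℕ) (a : ℂ) : (k : ℂ) * (a * a ^ (k - 1)) = k * a ^ k := by
  rcases k with _ | k
  · simp
  · rw [Nat.add_sub_cancel, ← pow_succ']

section Solutions

variable {p : ℕ} {q : ℂ} (α : ℂ)

lemma qExpSol_zero_eq : qExpSol p q α 0 = fun x : ℝ => exp (α ^ (p + 1) * x) := by
  funext x
  simp [qExpSol]

lemma hasDerivAt_qExpSol_zero (x : ℝ) :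
    HasDerivAt (qExpSol p q α 0) (α ^ (p + 1) * qExpSol p q α 0 x) x := by
  rw [qExpSol_zero_eq]
  have h := ((hasDerivAt_id (x : ℂ)).const_mul (α ^ (p + 1))).cexp.comp_ofReal
  simp only [id, mul_one] at h
  exact h.congr_deriv (mul_comm _ _)

lemma hasDerivAt_qExpSolDerivParam_zero (x : ℝ) :
    HasDerivAt (qExpSolDerivParam p q α 0)
      (α ^ (p + 1) * qExpSolDerivParam p q α 0 x + ((p : ℂ) + 1) * α ^ p * qExpSol p q α 0 x) x := by
  have hG : qExpSolDerivParam p q α 0 =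
      (fun x : ℝ => ((p : ℂ) + 1) * α ^ p * x) * qExpSol p q α 0 := by
    funext x
    simp [qExpSolDerivParam, qExpSol]
  have hlin : HasDerivAt (fun x : ℝ => ((p : ℂ) + 1) * α ^ p * x) (((p : ℂ) + 1) * α ^ p) x := by
    simpa using ((hasDerivAt_id (x : ℂ)).const_mul (((p : ℂ) + 1) * α ^ p)).comp_ofReal
  have h := hlin.mul (hasDerivAt_qExpSol_zero (p := p) (q := q) α x)
  rw [hG, Pi.mul_apply]
  exact h.congr_deriv (by ring)

variable (hqfact : qfact q p ≠ 0)
include hqfact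

lemma Dop_qExpSol {k : ℕ} (hk : k ≤ p) (x : ℝ) :
    Dop p q (qExpSol p q α) k x = α * qExpSol p q α k x := by
  rcases hk.lt_or_eq with hk | rfl
  · rw [Dop_of_lt _ hk, qExpSol, qint_mul_div_qfact_succ
      (qint_succ_ne_zero_of_qfact_ne_zero hqfact hk), qExpSol, pow_succ]
    ring
  · rw [Dop_self, (hasDerivAt_qExpSol_zero α x).deriv, qExpSol, qExpSol]
    simp only [pow_zero, one_mul, qfact_zero, div_one]
    ring

lemma Dop_qExpSolDerivParam {k : ℕ} (hk : k ≤ p) (x : ℝ) :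
    Dop p q (qExpSolDerivParam p q α) k x =
      α * qExpSolDerivParam p q α k x + qExpSol p q α k x := by
  rcases hk.lt_or_eq with hk | rfl
  · rw [Dop_of_lt _ hk, qExpSolDerivParam, qint_mul_div_qfact_succ
      (qint_succ_ne_zero_of_qfact_ne_zero hqfact hk), qExpSolDerivParam, qExpSol]
    simp only [Nat.add_sub_cancel, Nat.cast_succ]
    linear_combination (-(exp (α ^ (p + 1) * x) / qfact q k)) * natCast_mul_mul_pow_sub_one k α
  · rw [Dop_self, (hasDerivAt_qExpSolDerivParam_zero α x).deriv, qExpSolDerivParam,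
      qExpSolDerivParam, qExpSol, qExpSol]
    simp only [qfact_zero, div_one, Nat.cast_zero, zero_mul, add_zero, pow_zero, one_mul]
    linear_combination (-(exp (α ^ (k + 1) * x) / qfact q k)) * natCast_mul_mul_pow_sub_one k α

end Solutions

theorem second_order_degenerate_solution_general (p : ℕ) (q : ℂ)
    (hq : q = Complex.exp (2 * Real.pi * Complex.I / (p + 1))) (α : ℂ)
    (g : ℕ → ℝ → ℂ)
    (hg : ∀ k ≤ p, ∀ x : ℝ,
      g k x = (((p : ℂ) + 1) * α ^ (p + k) * x + (k : ℂ) * α ^ (k - 1))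
        * Complex.exp (α ^ (p + 1) * x) / qfact q k) :
    ∀ k ≤ p, ∀ x : ℝ,
      (Dop p q)^[2] g k x - 2 * α * Dop p q g k x + α ^ 2 * g k x = 0 := by
  intro k hk x
  have hprim : IsPrimitiveRoot q (p + 1) := by
    simpa [hq] using Complex.isPrimitiveRoot_exp (p + 1) p.succ_ne_zero
  have hqfact := hprim.qfact_ne_zero
  set E := qExpSol p q α
  set G := qExpSolDerivParam p q α
  have hgG : Dop p q g = Dop p q G := Dop_congr fun k hk => funext (hg k hk)
  have hDG : Dop p q (Dop p q G) = Dop p q (fun k x => α * G k x + E k x) :=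
    Dop_congr fun k hk => funext (Dop_qExpSolDerivParam α hqfact hk)
  have hgk : g k x = G k x := hg k hk x
  rw [Function.iterate_succ_apply', Function.iterate_one, hgG, hDG,
    Dop_const_mul_add α (hasDerivAt_qExpSolDerivParam_zero α x).differentiableAt
      (hasDerivAt_qExpSol_zero α x).differentiableAt,
    Dop_qExpSolDerivParam α hqfact hk, Dop_qExpSol α hqfact hk, hgk]
  ring

/-- Second order linear equation, degenerate case `c₁ = -2α`, `c₂ = α²`: the
parasuperfunction `g(x,θ) = (p+1)α^p x e_q(α^(p+1)x; αθ) + e^(α^(p+1)x) Σ_{k=1}^p (kα^(k-1)/[k]_q!) θ^k`,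
with components `g_k(x) = ((p+1)α^(p+k)x + kα^(k-1)) e^(α^(p+1)x)/[k]_q!`,
satisfies `(D² - 2αD + α²)g = 0`. -/
theorem second_order_degenerate_solution (p : ℕ) (hp : 1 ≤ p) (q : ℂ)
    (hq : q = Complex.exp (2 * Real.pi * Complex.I / (p + 1))) (α : ℂ)
    (g : ℕ → ℝ → ℂ)
    (hg : ∀ k ≤ p, ∀ x : ℝ,
      g k x = (((p : ℂ) + 1) * α ^ (p + k) * x + (k : ℂ) * α ^ (k - 1))
        * Complex.exp (α ^ (p + 1) * x) / qfact q k) :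
    ∀ k ≤ p, ∀ x : ℝ,
      (Dop p q)^[2] g k x - 2 * α * Dop p q g k x + α ^ 2 * g k x = 0 :=
  second_order_degenerate_solution_general p q hq α g hg
end
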